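/- arXiv:2312.03867 — 2 statements merged into one kernel-verified Lean document; each statement's English description precedes it below -/
import Mathlib

section
/- Let Δ : G → ℝ be nonnegative on a finite nonempty set G, let w : G → ℝ>0 be a probability vector with all entries strictly positive, and let g* ∈ G attain max_g Δ(g). Setting α* = 1 − w_{g*}, the CVaR fairness metric equals the max-gap metric: (1/(1−α*)) · max over subsets Q ⊆ G with Σ_{g∈Q} w_g ≤ 1−α* of Σ_{g∈Q} w_g·Δ(g) = max_{g∈G} Δ(g). -/
/-- With `α* = 1 - w g*` where `g*` attains the maximum gap, the CVaR fairness metric equals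
the max-gap metric. -/
theorem stmt_5 {G : Type*} [Fintype G] [Nonempty G] (w Δ : G → ℝ)
    (hw : ∀ g, 0 < w g) (hsum : ∑ g, w g = 1) (hΔ : ∀ g, 0 ≤ Δ g)
    (gstar : G) (hmax : ∀ g, Δ g ≤ Δ gstar) :
    (1 / (1 - (1 - w gstar))) *
      sSup {x : ℝ | ∃ Q : Finset G,
        (∑ g ∈ Q, w g) ≤ 1 - (1 - w gstar) ∧ x = ∑ g ∈ Q, w g * Δ g}
      = Δ gstar := by
  have hwpos := hw gstar
  have hmem : (w gstar * Δ gstar) ∈ {x : ℝ | ∃ Q : Finset G,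
      (∑ g ∈ Q, w g) ≤ 1 - (1 - w gstar) ∧ x = ∑ g ∈ Q, w g * Δ g} := by
    exact ⟨{gstar}, by simp⟩
  have hub : ∀ x ∈ {x : ℝ | ∃ Q : Finset G,
      (∑ g ∈ Q, w g) ≤ 1 - (1 - w gstar) ∧ x = ∑ g ∈ Q, w g * Δ g},
      x ≤ w gstar * Δ gstar := by
    rintro x ⟨Q, hQ, rfl⟩
    calc ∑ g ∈ Q, w g * Δ g ≤ ∑ g ∈ Q, w g * Δ gstar := by
          apply Finset.sum_le_sum
          intro i _
          exact mul_le_mul_of_nonneg_left (hmax i) (hw i).le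
      _ = (∑ g ∈ Q, w g) * Δ gstar := by rw [Finset.sum_mul]
      _ ≤ w gstar * Δ gstar := by
          apply mul_le_mul_of_nonneg_right _ (hΔ gstar)
          simpa using hQ
  have hsup : sSup {x : ℝ | ∃ Q : Finset G,
      (∑ g ∈ Q, w g) ≤ 1 - (1 - w gstar) ∧ x = ∑ g ∈ Q, w g * Δ g}
      = w gstar * Δ gstar := by
    apply le_antisymm
    · exact Real.sSup_le hub (by nlinarith [hΔ gstar])
    · exact le_csSup ⟨_, hub⟩ hmem
  rw [hsup]
  field_simp
  rw [sub_sub_cancel]; exact mul_div_cancel_left₀ _ hwpos.ne'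
end

section
/- Let G be a finite set, w : G → ℝ≥0 a probability vector, α ∈ [0,1), and E : G → [0,1]. Define ḡ = Σ_g w_g·E_g, Δ(g) = |E_g − ḡ|, and CVaR_α = (1/(1−α))·max over subsets Q with Σ_{g∈Q} w_g ≤ 1−α of Σ_{g∈Q} w_g·Δ(g). Then Σ_g w_g·E_g² − ḡ² ≥ (1−α)·(CVaR_α)². -/
/-- The weighted variance of the group means dominates `(1-α)` times the square of the CVaR
fairness metric: `∑ w g E g² − ḡ² ≥ (1−α)·CVaR_α²` where `ḡ = ∑ w g E g` and
`Δ g = |E g − ḡ|`. -/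
theorem stmt_6 {G : Type*} [Fintype G] (w E : G → ℝ) (α : ℝ)
    (hw : ∀ g, 0 ≤ w g) (hsum : ∑ g, w g = 1)
    (hE : ∀ g, E g ∈ Set.Icc (0:ℝ) 1) (hα : α ∈ Set.Ico (0:ℝ) 1) :
    (1 - α) * ((1 / (1 - α)) *
        sSup {x : ℝ | ∃ Q : Finset G, (∑ g ∈ Q, w g) ≤ 1 - α ∧
          x = ∑ g ∈ Q, w g * |E g - ∑ g', w g' * E g'|})^2
      ≤ ∑ g, w g * (E g)^2 - (∑ g, w g * E g)^2 := by
  obtain ⟨hα0, hα1⟩ := hα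
  have h1α : (0:ℝ) < 1 - α := by linarith
  set gbar : ℝ := ∑ g', w g' * E g' with hgbar
  set V : ℝ := ∑ g, w g * (E g)^2 - gbar^2 with hV
  have hVeq : V = ∑ g, w g * (E g - gbar)^2 := by
    have h1 : ∑ g, w g * (E g - gbar)^2
        = ∑ g, (w g * (E g)^2 - 2 * gbar * (w g * E g) + gbar^2 * w g) :=
      Finset.sum_congr rfl fun g _ => by ring
    have h2 : ∑ g, (w g * (E g)^2 - 2 * gbar * (w g * E g) + gbar^2 * w g)
        = ∑ g, w g * (E g)^2 - 2 * gbar * (∑ g, w g * E g) + gbar^2 * (∑ g, w g) := by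
      rw [Finset.sum_add_distrib, Finset.sum_sub_distrib, ← Finset.mul_sum, ← Finset.mul_sum]
    rw [h1, h2, hsum, ← hgbar]; ring
  have hV0 : 0 ≤ V := by
    rw [hVeq]
    exact Finset.sum_nonneg fun g _ => mul_nonneg (hw g) (sq_nonneg _)
  set S : Set ℝ := {x : ℝ | ∃ Q : Finset G, (∑ g ∈ Q, w g) ≤ 1 - α ∧
          x = ∑ g ∈ Q, w g * |E g - gbar|} with hS
  have hmem0 : (0:ℝ) ∈ S := ⟨∅, by simp [le_of_lt h1α]⟩
  -- every element of S is ≤ sqrt ((1-α)*V)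
  have hub : ∀ x ∈ S, x ≤ Real.sqrt ((1 - α) * V) := by
    rintro x ⟨Q, hQle, rfl⟩
    have hx0 : 0 ≤ ∑ g ∈ Q, w g * |E g - gbar| :=
      Finset.sum_nonneg fun g _ => mul_nonneg (hw g) (abs_nonneg _)
    rw [Real.le_sqrt hx0]
    have hcs : (∑ g ∈ Q, Real.sqrt (w g) * (Real.sqrt (w g) * |E g - gbar|))^2
        ≤ (∑ g ∈ Q, Real.sqrt (w g) ^ 2) * (∑ g ∈ Q, (Real.sqrt (w g) * |E g - gbar|)^2) :=
      Finset.sum_mul_sq_le_sq_mul_sq Q _ _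
    have e1 : ∀ g, Real.sqrt (w g) * (Real.sqrt (w g) * |E g - gbar|) = w g * |E g - gbar| := by
      intro g; rw [← mul_assoc, Real.mul_self_sqrt (hw g)]
    have e2 : ∀ g, Real.sqrt (w g) ^ 2 = w g := fun g => Real.sq_sqrt (hw g)
    have e3 : ∀ g, (Real.sqrt (w g) * |E g - gbar|)^2 = w g * (E g - gbar)^2 := by
      intro g; rw [mul_pow, e2, sq_abs]
    simp only [e1, e2, e3] at hcs
    calc (∑ g ∈ Q, w g * |E g - gbar|)^2
        ≤ (∑ g ∈ Q, w g) * (∑ g ∈ Q, w g * (E g - gbar)^2) := hcs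
      _ ≤ (1 - α) * (∑ g, w g * (E g - gbar)^2) := by
          apply mul_le_mul hQle _ (Finset.sum_nonneg fun g _ => mul_nonneg (hw g) (sq_nonneg _))
            (le_of_lt h1α)
          exact Finset.sum_le_sum_of_subset_of_nonneg (Finset.subset_univ Q)
            fun g _ _ => mul_nonneg (hw g) (sq_nonneg _)
      _ = (1 - α) * V := by rw [hVeq]
    exact mul_nonneg h1α.le hV0
  have hbdd : BddAbove S := ⟨Real.sqrt ((1 - α) * V), hub⟩
  have hSsup_le : sSup S ≤ Real.sqrt ((1 - α) * V) := csSup_le ⟨0, hmem0⟩ hub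
  have hSsup0 : 0 ≤ sSup S := le_csSup hbdd hmem0
  have hsq : (sSup S)^2 ≤ (1 - α) * V := by
    have := pow_le_pow_left₀ hSsup0 hSsup_le 2
    rwa [Real.sq_sqrt (mul_nonneg (le_of_lt h1α) hV0)] at this
  have : (1 - α) * ((1 / (1 - α)) * sSup S)^2 = (sSup S)^2 / (1 - α) := by
    field_simp
  rw [this, div_le_iff₀ h1α]
  linarith [hsq]
end
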